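/- Let H be Hermitian positive semidefinite, t > 0, ε ∈ (0,1], and suppose H̃ is Hermitian, commutes with H, and satisfies (1−ε′)H ⪯ H̃ ⪯ (1+ε′)H with ε′ = √ε/(t‖H‖). Then ‖e^{−itH} − e^{−itH̃}‖ ≤ √ε; in particular ‖(e^{−itH}−e^{−itH̃})ψ‖² ≤ ε for every unit vector ψ. -/

import Mathlib

open Matrix
open scoped Matrix.Norms.L2Operator ComplexOrder

lemma abs_exp_mul_I_sub_one_le (θ : ℝ) :
    ‖Complex.exp (θ * Complex.I) - 1‖ ≤ |θ| := by
  have key : Complex.exp (θ * Complex.I) - 1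
      = Complex.ofReal (Real.cos θ - 1) + Complex.ofReal (Real.sin θ) * Complex.I := by
    rw [Complex.exp_mul_I, ← Complex.ofReal_cos, ← Complex.ofReal_sin]; push_cast; ring
  have h1 : Complex.normSq (Complex.exp (θ * Complex.I) - 1) = 2 - 2 * Real.cos θ := by
    rw [key]; simp [Complex.normSq_apply]
    rw [Complex.cos_ofReal_re, Complex.sin_ofReal_re]; nlinarith [Real.sin_sq_add_cos_sq θ]
  have h2 : 2 - 2 * Real.cos θ ≤ θ ^ 2 := by
    have hs : Real.sin (θ / 2) ^ 2 ≤ (θ / 2) ^ 2 := Real.sin_sq_le_sq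
    have hc : Real.cos (θ / 2) ^ 2 = 1 / 2 + Real.cos (2 * (θ / 2)) / 2 := Real.cos_sq (θ / 2)
    have hsc := Real.sin_sq_add_cos_sq (θ / 2)
    have : (2 : ℝ) * (θ / 2) = θ := by ring
    rw [this] at hc
    nlinarith
  calc ‖Complex.exp (θ * Complex.I) - 1‖
      = Real.sqrt (Complex.normSq (Complex.exp (θ * Complex.I) - 1)) := Complex.norm_def _
    _ ≤ Real.sqrt (θ ^ 2) := Real.sqrt_le_sqrt (by rw [h1]; exact h2)
    _ = |θ| := Real.sqrt_sq_eq_abs θ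

lemma l2_opNorm_diagonal_le {n : ℕ} (v : Fin n → ℂ) {c : ℝ} (hc : 0 ≤ c)
    (h : ∀ i, ‖v i‖ ≤ c) : ‖Matrix.diagonal v‖ ≤ c := by
  rw [Matrix.l2_opNorm_def]
  apply ContinuousLinearMap.opNorm_le_bound _ hc
  intro x
  rw [LinearEquiv.trans_apply, LinearMap.coe_toContinuousLinearMap']
  have hform : (Matrix.toEuclideanLin (Matrix.diagonal v)) x
      = (WithLp.equiv 2 _).symm ((Matrix.diagonal v) *ᵥ (WithLp.equiv 2 _ x)) := by
    simp [Matrix.toEuclideanLin_apply]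
  rw [hform]
  rw [EuclideanSpace.norm_eq, EuclideanSpace.norm_eq]
  have hmv : ∀ i, ((WithLp.equiv 2 _).symm ((Matrix.diagonal v) *ᵥ (WithLp.equiv 2 _ x)) : EuclideanSpace ℂ (Fin n)) i = v i * x i := by
    intro i
    simp [Matrix.mulVec_diagonal]
  calc Real.sqrt (∑ i, ‖((WithLp.equiv 2 _).symm ((Matrix.diagonal v) *ᵥ (WithLp.equiv 2 _ x)) : EuclideanSpace ℂ (Fin n)) i‖ ^ 2)
      = Real.sqrt (∑ i, ‖v i * x i‖ ^ 2) := by rw [Finset.sum_congr rfl fun i _ => by rw [hmv i]]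
    _ ≤ Real.sqrt (∑ i, c ^ 2 * ‖x i‖ ^ 2) := by
        apply Real.sqrt_le_sqrt
        apply Finset.sum_le_sum
        intro i _
        rw [norm_mul]
        have := h i
        have : ‖v i‖ ^ 2 ≤ c ^ 2 := by nlinarith [norm_nonneg (v i), norm_nonneg (x i)]
        nlinarith [norm_nonneg (v i), norm_nonneg (x i), sq_nonneg (‖x i‖)]
    _ = c * Real.sqrt (∑ i, ‖x i‖ ^ 2) := by
        rw [← Finset.mul_sum, Real.sqrt_mul (by positivity), Real.sqrt_sq hc]

lemma norm_exp_smul_sub_one_le {n : ℕ} (H Ht : Matrix (Fin n) (Fin n) ℂ) (t : ℝ) (ht : 0 < t)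
    (hM : (H - Ht).IsHermitian) (c : ℝ) (hc : 0 ≤ c)
    (hev : ∀ i, t * |hM.eigenvalues i| ≤ c) :
    ‖NormedSpace.exp ((-Complex.I * t) • (H - Ht)) - 1‖ ≤ c := by
  set u := hM.eigenvectorUnitary with hu
  set V : Matrix (Fin n) (Fin n) ℂ := ↑u with hV
  set U : (Matrix (Fin n) (Fin n) ℂ)ˣ := Unitary.toUnits u with hU
  have hUcoe : (U : Matrix (Fin n) (Fin n) ℂ) = V := rfl
  have hUinv : ((U⁻¹ : (Matrix (Fin n) (Fin n) ℂ)ˣ) : Matrix (Fin n) (Fin n) ℂ) = star V := rfl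
  have hspec : H - Ht = V * Matrix.diagonal (RCLike.ofReal ∘ hM.eigenvalues) * star V :=
    hM.spectral_theorem
  have hD : (-Complex.I * t) • (H - Ht)
      = V * Matrix.diagonal (fun i => -Complex.I * t * (hM.eigenvalues i : ℂ)) * star V := by
    rw [congrArg (fun X => (-Complex.I * (t:ℂ)) • X) hspec]
    show (-Complex.I * (t:ℂ)) • (V * Matrix.diagonal (RCLike.ofReal ∘ hM.eigenvalues) * star V) = _
    rw [← smul_mul_assoc]
    congr 1
    rw [← mul_smul_comm, ← Matrix.diagonal_smul]
    congr 1
  have hexpD : NormedSpace.exp ((-Complex.I * t) • (H - Ht))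
      = V * Matrix.diagonal (fun i => Complex.exp (-Complex.I * t * (hM.eigenvalues i : ℂ))) * star V := by
    rw [hD]
    have hconj := Matrix.exp_units_conj U
      (Matrix.diagonal fun i => -Complex.I * t * (hM.eigenvalues i : ℂ))
    rw [hUcoe, hUinv] at hconj
    have hfun : (NormedSpace.exp (fun i : Fin n => -Complex.I * t * (hM.eigenvalues i : ℂ)))
        = fun i => Complex.exp (-Complex.I * t * (hM.eigenvalues i : ℂ)) := by
      funext i
      rw [Pi.coe_exp]
      exact (congrFun Complex.exp_eq_exp_ℂ _).symm
    rw [hconj, Matrix.exp_diagonal, hfun]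
  have hone : (1 : Matrix (Fin n) (Fin n) ℂ) = V * 1 * star V := by
    rw [mul_one]
    exact (Matrix.mem_unitaryGroup_iff.mp u.2).symm
  have hdiff : NormedSpace.exp ((-Complex.I * t) • (H - Ht)) - 1
      = V * Matrix.diagonal (fun i => Complex.exp (-Complex.I * t * (hM.eigenvalues i : ℂ)) - 1) * star V := by
    rw [hexpD]
    nth_rewrite 1 [hone]
    rw [← Matrix.sub_mul, ← Matrix.mul_sub, ← Matrix.diagonal_one, Matrix.diagonal_sub]
  rw [hdiff]
  have h1 : ‖V * Matrix.diagonal (fun i => Complex.exp (-Complex.I * t * (hM.eigenvalues i : ℂ)) - 1) * star V‖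
      = ‖Matrix.diagonal (fun i => Complex.exp (-Complex.I * t * (hM.eigenvalues i : ℂ)) - 1)‖ := by
    rw [mul_assoc]
    rw [CStarRing.norm_coe_unitary_mul (⟨V, u.2⟩ : unitary (Matrix (Fin n) (Fin n) ℂ))]
    exact CStarRing.norm_mul_coe_unitary _ (⟨star V, Unitary.star_mem u.2⟩ : unitary (Matrix (Fin n) (Fin n) ℂ))
  rw [h1]
  apply l2_opNorm_diagonal_le _ hc
  intro i
  have harg : -Complex.I * t * (hM.eigenvalues i : ℂ) = ((-(t * hM.eigenvalues i) : ℝ) : ℂ) * Complex.I := by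
    push_cast; ring
  rw [harg]
  calc ‖Complex.exp (((-(t * hM.eigenvalues i) : ℝ) : ℂ) * Complex.I) - 1‖
      ≤ |(-(t * hM.eigenvalues i) : ℝ)| := abs_exp_mul_I_sub_one_le _
    _ = t * |hM.eigenvalues i| := by rw [abs_neg, abs_mul, abs_of_pos ht]
    _ ≤ c := hev i

/-- Precision choice for sparsified Hamiltonian simulation.  If `H ⪰ 0` is Hermitian
with `‖H‖ > 0`, `t > 0`, `ε ∈ (0,1]`, and the Hermitian `H̃` commutes with `H` and
satisfies `(1-ε')H ⪯ H̃ ⪯ (1+ε')H` with `ε' = √ε/(t‖H‖)`, then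
`‖e^{-itH} - e^{-itH̃}‖ ≤ √ε`, and in particular
`‖(e^{-itH} - e^{-itH̃})ψ‖² ≤ ε` for every unit vector `ψ`. -/
theorem sparsifier_precision_choice
    {n : ℕ} (H Ht : Matrix (Fin n) (Fin n) ℂ)
    (hH : H.IsHermitian) (hHt : Ht.IsHermitian)
    (hHpsd : H.PosSemidef) (hHnorm : 0 < ‖H‖)
    (hcomm : Commute H Ht)
    (t : ℝ) (ht : 0 < t) (ε : ℝ) (hε : 0 < ε) (hε1 : ε ≤ 1)
    (ε' : ℝ) (hε' : ε' = Real.sqrt ε / (t * ‖H‖))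
    (hlow : (Ht - (1 - ε' : ℝ) • H).PosSemidef)
    (hup : ((1 + ε' : ℝ) • H - Ht).PosSemidef) :
    ‖NormedSpace.exp ((-Complex.I * t) • H)
        - NormedSpace.exp ((-Complex.I * t) • Ht)‖ ≤ Real.sqrt ε
    ∧ ∀ ψ : Fin n → ℂ, star ψ ⬝ᵥ ψ = 1 →
        (star ((NormedSpace.exp ((-Complex.I * t) • H)
              - NormedSpace.exp ((-Complex.I * t) • Ht)).mulVec ψ)
          ⬝ᵥ ((NormedSpace.exp ((-Complex.I * t) • H)
              - NormedSpace.exp ((-Complex.I * t) • Ht)).mulVec ψ)).re ≤ ε := by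
  have hM : (H - Ht).IsHermitian := hH.sub hHt
  -- eigenvalue bound
  have hev : ∀ i, |hM.eigenvalues i| ≤ ε' * ‖H‖ := by
    intro i
    set x : EuclideanSpace ℂ (Fin n) := hM.eigenvectorBasis i with hx
    set v : Fin n → ℂ := ⇑x with hv
    have hxnorm : ‖x‖ = 1 := hM.eigenvectorBasis.orthonormal.1 i
    have hv1 : star v ⬝ᵥ v = 1 := by
      have := EuclideanSpace.inner_eq_star_dotProduct x x
      rw [inner_self_eq_norm_sq_to_K, hxnorm] at this
      rw [dotProduct_comm]; simpa using this.symm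
    have hveq : (H - Ht) *ᵥ v = (hM.eigenvalues i : ℝ) • v := hM.mulVec_eigenvectorBasis i
    have hqM : (star v ⬝ᵥ ((H - Ht) *ᵥ v)) = (hM.eigenvalues i : ℂ) := by
      rw [hveq]
      have : star v ⬝ᵥ ((hM.eigenvalues i : ℝ) • v) = (hM.eigenvalues i : ℝ) • (star v ⬝ᵥ v) :=
        dotProduct_smul _ _ _
      rw [this, hv1]
      simp [Complex.real_smul]
    have hsplit : (star v ⬝ᵥ (H *ᵥ v)).re - (star v ⬝ᵥ (Ht *ᵥ v)).re = hM.eigenvalues i := by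
      have : star v ⬝ᵥ ((H - Ht) *ᵥ v) = star v ⬝ᵥ (H *ᵥ v) - star v ⬝ᵥ (Ht *ᵥ v) := by
        rw [Matrix.sub_mulVec, dotProduct_sub]
      rw [this] at hqM
      have := congrArg Complex.re hqM
      simpa using this
    have hqHnn : 0 ≤ (star v ⬝ᵥ (H *ᵥ v)).re := by
      have := hHpsd.dotProduct_mulVec_nonneg v
      exact (Complex.le_def.mp this).1
    have hqHle : (star v ⬝ᵥ (H *ᵥ v)).re ≤ ‖H‖ := by
      set y : EuclideanSpace ℂ (Fin n) := (EuclideanSpace.equiv (Fin n) ℂ).symm (H *ᵥ v) with hy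
      have hinner : (inner ℂ x y : ℂ) = star v ⬝ᵥ (H *ᵥ v) := by
        rw [EuclideanSpace.inner_eq_star_dotProduct]
        exact dotProduct_comm _ _
      calc (star v ⬝ᵥ (H *ᵥ v)).re = (inner ℂ x y : ℂ).re := by rw [hinner]
        _ ≤ ‖(inner ℂ x y : ℂ)‖ := Complex.re_le_norm _
        _ ≤ ‖x‖ * ‖y‖ := norm_inner_le_norm x y
        _ ≤ ‖x‖ * (‖H‖ * ‖x‖) :=
            mul_le_mul_of_nonneg_left (show ‖y‖ ≤ ‖H‖ * ‖x‖ from H.l2_opNorm_mulVec x)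
              (norm_nonneg x)
        _ = ‖H‖ := by rw [hxnorm]; ring
    have hlow' : 0 ≤ (star v ⬝ᵥ (Ht *ᵥ v)).re - (1 - ε') * (star v ⬝ᵥ (H *ᵥ v)).re := by
      have h0 := (Complex.le_def.mp (hlow.dotProduct_mulVec_nonneg v)).1
      have : star v ⬝ᵥ ((Ht - (1 - ε' : ℝ) • H) *ᵥ v)
          = star v ⬝ᵥ (Ht *ᵥ v) - (1 - ε' : ℝ) • (star v ⬝ᵥ (H *ᵥ v)) := by
        rw [Matrix.sub_mulVec, dotProduct_sub, Matrix.smul_mulVec,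
          dotProduct_smul]
      rw [this] at h0
      simpa [Complex.real_smul] using h0
    have hup' : 0 ≤ (1 + ε') * (star v ⬝ᵥ (H *ᵥ v)).re - (star v ⬝ᵥ (Ht *ᵥ v)).re := by
      have h0 := (Complex.le_def.mp (hup.dotProduct_mulVec_nonneg v)).1
      have : star v ⬝ᵥ (((1 + ε' : ℝ) • H - Ht) *ᵥ v)
          = (1 + ε' : ℝ) • (star v ⬝ᵥ (H *ᵥ v)) - star v ⬝ᵥ (Ht *ᵥ v) := by
        rw [Matrix.sub_mulVec, dotProduct_sub, Matrix.smul_mulVec,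
          dotProduct_smul]
      rw [this] at h0
      simpa [Complex.real_smul] using h0
    have hε'pos : 0 < ε' := by
      rw [hε']
      positivity
    rw [abs_le]
    constructor <;> nlinarith [hqHnn, hqHle, hlow', hup', hsplit]
  have hεH : ε' * ‖H‖ = Real.sqrt ε / t := by
    rw [hε']
    field_simp
  have hev' : ∀ i, t * |hM.eigenvalues i| ≤ Real.sqrt ε := by
    intro i
    have h1 : |hM.eigenvalues i| ≤ Real.sqrt ε / t := hεH ▸ hev i
    calc t * |hM.eigenvalues i| ≤ t * (Real.sqrt ε / t) := by
          exact mul_le_mul_of_nonneg_left h1 ht.le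
      _ = Real.sqrt ε := by field_simp
  -- structural decomposition
  set A := (-Complex.I * t) • H with hA
  set B := (-Complex.I * t) • Ht with hB
  set D := (-Complex.I * t) • (H - Ht) with hD
  have hBD : Commute B D := ((hcomm.symm.sub_right (Commute.refl Ht)).smul_left _).smul_right _
  have hsum : B + D = A := by
    rw [hA, hB, hD, ← smul_add, add_sub_cancel]
  have hexp : NormedSpace.exp A - NormedSpace.exp B
      = NormedSpace.exp B * (NormedSpace.exp D - 1) := by
    rw [mul_sub, mul_one, ← Matrix.exp_add_of_commute _ _ hBD, hsum]
  have hskew : B ∈ skewAdjoint (Matrix (Fin n) (Fin n) ℂ) := by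
    rw [skewAdjoint.mem_iff, star_smul, star_eq_conjTranspose, hHt.eq]
    rw [hB, ← neg_smul]
    congr 1
    simp [Complex.ext_iff]
  have hBunit : NormedSpace.exp B ∈ unitary (Matrix (Fin n) (Fin n) ℂ) :=
    by
    have hs : star B = -B := skewAdjoint.mem_iff.mp hskew
    have hst : star (NormedSpace.exp B) = NormedSpace.exp (-B) := by
      rw [star_eq_conjTranspose, ← Matrix.exp_conjTranspose, ← star_eq_conjTranspose, hs]
    rw [Unitary.mem_iff, hst, ← Matrix.exp_add_of_commute _ _ (Commute.refl B).neg_left,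
      ← Matrix.exp_add_of_commute _ _ (Commute.refl B).neg_right, neg_add_cancel, add_neg_cancel,
      NormedSpace.exp_zero, and_self]
  have hmain : ‖NormedSpace.exp A - NormedSpace.exp B‖ ≤ Real.sqrt ε := by
    rw [hexp,
      CStarRing.norm_coe_unitary_mul (⟨_, hBunit⟩ : unitary (Matrix (Fin n) (Fin n) ℂ))]
    exact norm_exp_smul_sub_one_le H Ht t ht hM _ (Real.sqrt_nonneg ε) hev'
  refine ⟨hmain, ?_⟩
  intro ψ hψ
  set X := NormedSpace.exp A - NormedSpace.exp B with hX
  set xψ : EuclideanSpace ℂ (Fin n) := (EuclideanSpace.equiv (Fin n) ℂ).symm ψ with hxψ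
  set y : EuclideanSpace ℂ (Fin n) := (EuclideanSpace.equiv (Fin n) ℂ).symm (X *ᵥ ψ) with hy
  have hxψnorm : ‖xψ‖ = 1 := by
    have h1 : (inner ℂ xψ xψ : ℂ) = star ψ ⬝ᵥ ψ := (EuclideanSpace.inner_eq_star_dotProduct xψ xψ).trans (dotProduct_comm _ _)
    rw [hψ, inner_self_eq_norm_sq_to_K] at h1
    have h3 : ((‖xψ‖ : ℝ) : ℂ) ^ 2 = 1 := h1
    have h2 : ‖xψ‖ ^ 2 = 1 := by exact_mod_cast h3
    rw [← Real.sqrt_sq (norm_nonneg xψ), h2, Real.sqrt_one]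
  have hXy : ‖y‖ ≤ Real.sqrt ε := by
    calc ‖y‖ ≤ ‖X‖ * ‖xψ‖ := X.l2_opNorm_mulVec xψ
      _ ≤ Real.sqrt ε * 1 := by
          rw [hxψnorm]
          exact mul_le_mul_of_nonneg_right hmain (by norm_num)
      _ = Real.sqrt ε := mul_one _
  have hinner : (star (X *ᵥ ψ) ⬝ᵥ (X *ᵥ ψ)) = ((‖y‖ : ℂ) ^ 2) := by
    have h1 : (inner ℂ y y : ℂ) = star (X *ᵥ ψ) ⬝ᵥ (X *ᵥ ψ) := by
      rw [EuclideanSpace.inner_eq_star_dotProduct]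
      exact dotProduct_comm _ _
    rw [← h1]
    exact inner_self_eq_norm_sq_to_K y
  show (star (X *ᵥ ψ) ⬝ᵥ (X *ᵥ ψ)).re ≤ ε
  rw [hinner]
  have : ((‖y‖ : ℂ) ^ 2).re = ‖y‖ ^ 2 := by
    rw [← Complex.ofReal_pow, Complex.ofReal_re]
  rw [this]
  calc ‖y‖ ^ 2 ≤ Real.sqrt ε ^ 2 := by nlinarith [norm_nonneg y, Real.sqrt_nonneg ε]
    _ = ε := Real.sq_sqrt hε.le
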